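/- Let F be a free group, let X, Y, γ ∈ F, let n ≥ 1 be a natural number, and let I, J, K, L be natural numbers with I + J = n - 1 and K + L = n - 1. Assume that the product XY is nontrivial and is not a proper power. If γ·(XY)^I·X·γ⁻¹ = (YX)^L·Y and γ·(YX)^J·Y·γ⁻¹ = (XY)^K·X, then there exist an element z ∈ F and integers m and k such that X = z^m and Y = z^k. -/

import Mathlib

/-!
Put `w = XY`. Substituting `Y = X⁻¹w` into the two conjugation identities and multiplying them
shows that `Xγ` commutes with `wⁿ`; writing `Xγ = w^T`, the first identity alone then says that
`X w^{-T}` squares to a power of `w`.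
In a free group the centralizer of `c ≠ 1` is cyclic: it is free by Nielsen–Schreier, and since
`c` is central in it, `c` is a power of every free generator (compare exponent sums), which
allows at most one generator. So when `w` is not a proper power, every element that commutes
with a nontrivial power of `w`, or whose square is a power of `w`, is a power of `w`. This applies
to `Xγ` and then to `X w^{-T}`, making `X` and `Y = X⁻¹w` powers of `w`.
-/

open Subgroup

section Group
variable {G : Type*} [Group G]

def IsProperPower (w : G) : Prop :=
  ∃ (z : G) (k : ℤ), 2 ≤ |k| ∧ w = z ^ k

theorem IsProperPower.of_eq_one {w : G} (hw : w = 1) : IsProperPower w :=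
  ⟨1, 2, by norm_num, by rw [hw, one_zpow]⟩

theorem mem_zpowers_zpow_of_not_isProperPower {g : G} {t : ℤ} (h : ¬IsProperPower (g ^ t)) :
    g ∈ zpowers (g ^ t) := by
  have : |t| < 2 := not_le.mp fun ht => h ⟨g, t, ht, rfl⟩
  have : t ≠ 0 := by rintro rfl; exact h (.of_eq_one (zpow_zero g))
  rw [abs_lt] at *
  obtain rfl | rfl : t = 1 ∨ t = -1 := by omega
  all_goals simp

theorem mul_pow_mul_eq_inv_mul_pow_succ (X Y : G) (k : ℕ) :
    (Y * X) ^ k * Y = X⁻¹ * (X * Y) ^ (k + 1) := by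
  rw [pow_succ', mul_assoc X Y, inv_mul_cancel_left]
  exact (SemiconjBy.pow_right (mul_assoc Y X Y).symm k).eq.symm

theorem commute_mul_pow_of_conj {X Y γ : G} {I J K L : ℕ} (hIJKL : I + J = K + L)
    (h1 : γ * (X * Y) ^ I * X * γ⁻¹ = (Y * X) ^ L * Y)
    (h2 : γ * (Y * X) ^ J * Y * γ⁻¹ = (X * Y) ^ K * X) :
    Commute (X * γ) ((X * Y) ^ (I + J + 1)) := by
  rw [mul_pow_mul_eq_inv_mul_pow_succ] at h1
  rw [mul_assoc γ, mul_pow_mul_eq_inv_mul_pow_succ] at h2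
  set w := X * Y
  calc X * γ * w ^ (I + J + 1)
      = X * (γ * w ^ I * X * γ⁻¹) * (γ * (X⁻¹ * w ^ (J + 1)) * γ⁻¹) * X⁻¹ * (X * γ) := by
        group
    _ = w ^ (L + 1) * w ^ K * (X * γ) := by rw [h1, h2]; group
    _ = w ^ (I + J + 1) * (X * γ) := by rw [← pow_add, hIJKL]; ring_nf

theorem sq_mul_zpow_neg_of_conj {X Y γ : G} {I L : ℕ} {T : ℤ} (hγ : X * γ = (X * Y) ^ T)
    (h1 : γ * (X * Y) ^ I * X * γ⁻¹ = (Y * X) ^ L * Y) :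
    (X * (X * Y) ^ (-T)) ^ 2 = (X * Y) ^ ((L : ℤ) + 1 - I - 2 * T) := by
  obtain rfl : γ = X⁻¹ * (X * Y) ^ T := eq_inv_mul_of_mul_eq hγ
  rw [mul_pow_mul_eq_inv_mul_pow_succ] at h1
  set w := X * Y
  calc (X * w ^ (-T)) ^ 2
      = w ^ (-T - I) * X * (X⁻¹ * w ^ T * w ^ I * X * (X⁻¹ * w ^ T)⁻¹) * w ^ (-T) := by
        rw [sq]; group
    _ = w ^ ((L : ℤ) + 1 - I - 2 * T) := by rw [h1]; group

end Group

namespace FreeGroup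
variable {α : Type*}

theorem not_commute_of_of {x y : α} (h : x ≠ y) : ¬Commute (of x) (of y) := by
  classical
  let f : α → Equiv.Perm (Fin 3) := fun s =>
    if s = x then Equiv.swap 0 1 else if s = y then Equiv.swap 1 2 else 1
  intro hc
  have := congrArg (lift f) hc.eq
  rw [_root_.map_mul, _root_.map_mul, lift_apply_of, lift_apply_of] at this
  simp only [f, if_pos rfl, if_neg h.symm] at this
  exact absurd this (by decide)

instance isCyclic_of_subsingleton [Subsingleton α] : IsCyclic (FreeGroup α) := by
  rcases isEmpty_or_nonempty α with _ | ⟨⟨x⟩⟩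
  · infer_instance
  · have : Unique α := uniqueOfSubsingleton x
    infer_instance

section ExponentSum
variable [DecidableEq α]

def exponentSum (x : α) : FreeGroup α →* Multiplicative ℤ :=
  lift (Pi.mulSingle x (Multiplicative.ofAdd 1))

@[simp]
theorem exponentSum_of_self (x : α) : exponentSum x (of x) = Multiplicative.ofAdd 1 := by
  simp [exponentSum]

theorem exponentSum_of_of_ne {x y : α} (h : y ≠ x) : exponentSum x (of y) = 1 := by
  simp [exponentSum, h]

end ExponentSum

end FreeGroup

namespace IsFreeGroup
variable {G : Type*} [Group G] [IsFreeGroup G]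

instance : IsMulTorsionFree G :=
  (toFreeGroup G).injective.isMulTorsionFree (toFreeGroup G).toMonoidHom

theorem isCyclic_of_subsingleton_generators [Subsingleton (Generators G)] : IsCyclic G :=
  isCyclic_of_surjective (mulEquiv G) (mulEquiv G).surjective

theorem isCyclic_of_isMulCommutative [IsMulCommutative G] : IsCyclic G := by
  have : Subsingleton (Generators G) :=
    ⟨fun x y => by_contra fun h => FreeGroup.not_commute_of_of h
      ((show Commute _ _ from IsMulCommutative.is_comm.comm _ _).of_map (mulEquiv G).injective)⟩
  exact isCyclic_of_subsingleton_generators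

theorem exists_zpow_eq_of_commute {a b : G} (h : Commute a b) :
    ∃ z : G, ∃ m k : ℤ, a = z ^ m ∧ b = z ^ k := by
  have := isMulCommutative_closure (k := {a, b}) (by
    rintro _ (rfl | rfl) _ (rfl | rfl) <;> first | rfl | exact h.eq | exact h.eq.symm)
  obtain ⟨z, hz⟩ := (isCyclic_of_isMulCommutative (G := closure {a, b})).exists_generator
  obtain ⟨m, hm⟩ := mem_zpowers_iff.mp (hz ⟨a, subset_closure (by simp)⟩)
  obtain ⟨k, hk⟩ := mem_zpowers_iff.mp (hz ⟨b, subset_closure (by simp)⟩)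
  exact ⟨z, m, k, congrArg Subtype.val hm.symm, congrArg Subtype.val hk.symm⟩

end IsFreeGroup

namespace FreeGroup
variable {α : Type*}

theorem exists_eq_zpow_of_commute_of {c : FreeGroup α} {x : α} (h : Commute c (of x)) :
    ∃ A : ℤ, c = of x ^ A := by
  classical
  obtain ⟨z, k, m, rfl, hx⟩ := IsFreeGroup.exists_zpow_eq_of_commute h
  have hm : m * Multiplicative.toAdd (exponentSum x z) = 1 := by
    simpa using congrArg (Multiplicative.toAdd ∘ exponentSum x) hx.symm
  have hm_sq : m * m = 1 := by
    rcases Int.eq_one_or_neg_one_of_mul_eq_one hm with rfl | rfl <;> rfl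
  refine ⟨m * k, ?_⟩
  rw [hx, ← zpow_mul, ← mul_assoc, hm_sq, one_mul]

theorem subsingleton_of_forall_commute {c : FreeGroup α} (hc : c ≠ 1)
    (h : ∀ g, Commute c g) : Subsingleton α := by
  classical
  refine ⟨fun x y => by_contra fun hxy => hc ?_⟩
  obtain ⟨A, rfl⟩ := exists_eq_zpow_of_commute_of (h (of x))
  obtain ⟨B, hB⟩ := exists_eq_zpow_of_commute_of (h (of y))
  have hB0 : 0 = B := by
    simpa [exponentSum_of_of_ne hxy] using congrArg (Multiplicative.toAdd ∘ exponentSum y) hB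
  rw [hB, ← hB0, zpow_zero]

end FreeGroup

namespace IsFreeGroup
variable {G : Type*} [Group G] [IsFreeGroup G]

theorem isCyclic_centralizer {c : G} (hc : c ≠ 1) : IsCyclic (centralizer {c}) := by
  let e := toFreeGroup (centralizer {c})
  let c' : centralizer {c} := ⟨c, mem_centralizer_singleton_iff.mpr rfl⟩
  have : Subsingleton (Generators (centralizer {c})) := by
    refine FreeGroup.subsingleton_of_forall_commute (c := e c') (by simpa [c'] using hc)
      fun g => ?_
    rw [← e.apply_symm_apply g]
    exact Commute.map (Subtype.ext (mem_centralizer_singleton_iff.mp (e.symm g).2).symm) e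
  exact isCyclic_of_subsingleton_generators

theorem mem_zpowers_of_commute_zpow {w u : G} (hw : ¬IsProperPower w) {k : ℤ} (hk : k ≠ 0)
    (hu : Commute u (w ^ k)) : u ∈ zpowers w := by
  have hwk : w ^ k ≠ 1 := by
    rw [Ne, IsMulTorsionFree.zpow_eq_one_iff_left hk]
    exact fun h => hw (.of_eq_one h)
  obtain ⟨g, hg⟩ := (isCyclic_centralizer hwk).exists_generator
  have exists_zpow_eq : ∀ v : G, Commute v (w ^ k) → ∃ t : ℤ, (g : G) ^ t = v := fun v hv =>
    (mem_zpowers_iff.mp (hg ⟨v, mem_centralizer_singleton_iff.mpr hv.eq⟩)).imp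
      fun _ ht => congrArg Subtype.val ht
  generalize (g : G) = g at exists_zpow_eq
  obtain ⟨t, rfl⟩ := exists_zpow_eq w ((Commute.refl w).zpow_right k)
  obtain ⟨s, rfl⟩ := exists_zpow_eq u hu
  exact zpow_mem (mem_zpowers_zpow_of_not_isProperPower hw) s

theorem mem_zpowers_of_sq_mem_zpowers {w u : G} (hw : ¬IsProperPower w)
    (h : u ^ 2 ∈ zpowers w) : u ∈ zpowers w := by
  obtain ⟨j, hj⟩ := mem_zpowers_iff.mp h
  by_cases hj0 : j = 0
  · rw [hj0, zpow_zero, eq_comm, sq_eq_one] at hj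
    exact hj ▸ one_mem _
  · exact mem_zpowers_of_commute_zpow hw hj0 (hj ▸ (Commute.refl u).pow_right 2)

end IsFreeGroup

theorem stmt_3_general {α : Type*} (X Y γ : FreeGroup α) (n : ℕ)
    (I J K L : ℕ) (hIJ : I + J = n - 1) (hKL : K + L = n - 1)
    (hnp : ¬ ∃ (z : FreeGroup α) (k : ℤ), 2 ≤ |k| ∧ X * Y = z ^ k)
    (h1 : γ * (X * Y) ^ I * X * γ⁻¹ = (Y * X) ^ L * Y)
    (h2 : γ * (Y * X) ^ J * Y * γ⁻¹ = (X * Y) ^ K * X) :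
    ∃ (z : FreeGroup α) (m k : ℤ), X = z ^ m ∧ Y = z ^ k := by
  have hγ : Commute (X * γ) ((X * Y) ^ ((I + J + 1 : ℕ) : ℤ)) := by
    rw [zpow_natCast]; exact commute_mul_pow_of_conj (hIJ.trans hKL.symm) h1 h2
  obtain ⟨T, hT⟩ := mem_zpowers_iff.mp <|
    IsFreeGroup.mem_zpowers_of_commute_zpow hnp (by omega) hγ
  obtain ⟨B, hB⟩ := mem_zpowers_iff.mp <|
    IsFreeGroup.mem_zpowers_of_sq_mem_zpowers hnp ⟨_, (sq_mul_zpow_neg_of_conj hT.symm h1).symm⟩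
  have hX : X = (X * Y) ^ (B + T) := by rw [zpow_add, hB, zpow_neg, inv_mul_cancel_right]
  refine ⟨X * Y, B + T, -(B + T) + 1, hX, ?_⟩
  rw [zpow_add, zpow_neg, ← hX, zpow_one, inv_mul_cancel_left]

theorem stmt_3 {α : Type*} (X Y γ : FreeGroup α) (n : ℕ) (hn : 1 ≤ n)
    (I J K L : ℕ) (hIJ : I + J = n - 1) (hKL : K + L = n - 1)
    (hXY : X * Y ≠ 1)
    (hnp : ¬ ∃ (z : FreeGroup α) (k : ℤ), 2 ≤ |k| ∧ X * Y = z ^ k)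
    (h1 : γ * (X * Y) ^ I * X * γ⁻¹ = (Y * X) ^ L * Y)
    (h2 : γ * (Y * X) ^ J * Y * γ⁻¹ = (X * Y) ^ K * X) :
    ∃ (z : FreeGroup α) (m k : ℤ), X = z ^ m ∧ Y = z ^ k :=
  stmt_3_general X Y γ n I J K L hIJ hKL hnp h1 h2
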